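/- arXiv:1003.2297 — 6 statements merged into one kernel-verified Lean document; each statement's English description precedes it below -/
import Mathlib

section
/- For a finite group G and a subgroup H with G = H·Z(G), the relative commutativity degree satisfies d(H,G) = d(G), where d(G) is the commutativity degree of G. -/
/-!
Whether `g` commutes with `y` depends only on the coset `g Z(G)`, so the commuting pairs in
`H × G` and in `G × G` are the preimages of one set of pairs in `G ⧸ Z(G) × G` under the
homomorphisms `H × G → G ⧸ Z(G) × G` and `G × G → G ⧸ Z(G) × G`. Both are surjective, the first
because `G = H Z(G)`, and the fibres of a surjective homomorphism all have the size of its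
kernel, so it preserves the proportion of elements lying in a preimage.
-/

open Function

namespace MonoidHom

variable {A B : Type*} [Group A] [Group B] {φ : A →* B}

theorem card_preimage_of_surjective (hφ : Surjective φ) (t : Set B) :
    Nat.card (φ ⁻¹' t) = Nat.card φ.ker * Nat.card t := by
  let e := QuotientGroup.quotientKerEquivOfSurjective φ hφ
  have hfactor : φ ⁻¹' t = QuotientGroup.mk ⁻¹' (e ⁻¹' t) := rfl
  rw [hfactor, QuotientGroup.card_preimage_mk, Nat.card_preimage_of_injective e.injective (by simp)]

theorem card_preimage_div_card_of_surjective [Finite A] (hφ : Surjective φ) (t : Set B) :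
    (Nat.card (φ ⁻¹' t) : ℚ) / Nat.card A = Nat.card t / Nat.card B := by
  have : Finite B := Finite.of_surjective φ hφ
  have hA := card_preimage_of_surjective hφ Set.univ
  rw [Set.preimage_univ, Nat.card_univ, Nat.card_univ] at hA
  rw [div_eq_div_iff (Nat.cast_ne_zero.mpr Nat.card_pos.ne')
    (Nat.cast_ne_zero.mpr Nat.card_pos.ne'), card_preimage_of_surjective hφ, hA]
  push_cast
  ring

end MonoidHom

section CommuteModCenter

variable (G : Type*) [Group G]

def commuteModCenter : Set ((G ⧸ Subgroup.center G) × G) :=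
  {q | ∃ x : G, (x : G ⧸ Subgroup.center G) = q.1 ∧ Commute x q.2}

variable {G}

theorem mk_mem_commuteModCenter_iff {g y : G} :
    ((g : G ⧸ Subgroup.center G), y) ∈ commuteModCenter G ↔ Commute g y := by
  refine ⟨fun ⟨x, hx, hxy⟩ => ?_, fun h => ⟨g, rfl, h⟩⟩
  obtain ⟨z, rfl⟩ : ∃ z : Subgroup.center G, g = x * z :=
    ⟨⟨x⁻¹ * g, QuotientGroup.eq.mp hx⟩, by simp⟩
  exact hxy.mul_left (Subgroup.mem_center_iff.mp z.2 y).symm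

end CommuteModCenter

open MonoidHom in
theorem relative_commutativity_degree_eq_of_center_product
    {G : Type*} [Group G] [Finite G] (H : Subgroup G)
    (hHZ : ∀ g : G, ∃ h ∈ H, ∃ z ∈ Subgroup.center G, g = h * z) :
    (Nat.card {p : H × G // Commute (p.1 : G) p.2} : ℚ) /
        (Nat.card H * Nat.card G) =
      (Nat.card {p : G × G // Commute p.1 p.2} : ℚ) / (Nat.card G) ^ 2 := by
  let φH := ((QuotientGroup.mk' (Subgroup.center G)).comp H.subtype).prodMap (MonoidHom.id G)
  let φG := (QuotientGroup.mk' (Subgroup.center G)).prodMap (MonoidHom.id G)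
  have hφH : Surjective φH := by
    rw [coe_prodMap]
    refine Surjective.prodMap ?_ surjective_id
    rintro ⟨g⟩
    obtain ⟨h, hh, z, hz, rfl⟩ := hHZ g
    exact ⟨⟨h, hh⟩, (QuotientGroup.eq.mpr (by simpa using hz)).symm⟩
  have hφG : Surjective φG := by
    rw [coe_prodMap]
    exact (QuotientGroup.mk'_surjective _).prodMap surjective_id
  have h₁ := card_preimage_div_card_of_surjective hφH (commuteModCenter G)
  have h₂ := card_preimage_div_card_of_surjective hφG (commuteModCenter G)
  have e₁ : φH ⁻¹' commuteModCenter G = {p | Commute (p.1 : G) p.2} :=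
    Set.ext fun _ => mk_mem_commuteModCenter_iff
  have e₂ : φG ⁻¹' commuteModCenter G = {p | Commute p.1 p.2} :=
    Set.ext fun _ => mk_mem_commuteModCenter_iff
  rw [e₁, Set.coe_ofPred, Nat.card_prod, Nat.cast_mul] at h₁
  rw [e₂, Set.coe_ofPred, Nat.card_prod, Nat.cast_mul, ← sq] at h₂
  rw [h₁, h₂]
end

section
/- For a finite group G and a subgroup H with G = H·Z(G), the commutativity degree of H equals the commutativity degree of G: d(H) = d(G). -/
/-!
Both multiplication `H × Z(G) → G` and projection `H × Z(G) → H` are surjective homomorphisms,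
whose fibres all have the size of the kernel; so the proportion of commuting pairs downstairs equals
the proportion of pairs upstairs that commute after mapping. Central factors do not affect
commutation, so `h₁ z₁` and `h₂ z₂` commute exactly when `h₁` and `h₂` do, and the two events
upstairs are the same.
-/

namespace MonoidHom

variable {A B : Type*} [Group A] [Group B] {f : A →* B}

theorem card_subtype_comp_eq_mul_card_ker (hf : Function.Surjective f) (P : B → Prop) :
    Nat.card {a // P (f a)} = Nat.card {b // P b} * Nat.card f.ker := by
  rw [← Nat.card_prod]
  exact Nat.card_congr <|
    (Equiv.sigmaSubtypeFiberEquivSubtype f fun _ => Iff.rfl).symm.trans <|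
      (Equiv.sigmaCongrRight fun b : {b // P b} => fiberEquivKerOfSurjective hf b.1).trans <|
        Equiv.sigmaEquivProd _ _

theorem card_subtype_comp_div_card_eq [Finite A] (hf : Function.Surjective f) (P : B → Prop) :
    (Nat.card {a // P (f a)} : ℚ) / Nat.card A = Nat.card {b // P b} / Nat.card B := by
  have hA : Nat.card A = Nat.card B * Nat.card f.ker := by
    rw [← Nat.card_congr (Equiv.subtypeUnivEquiv fun _ => trivial),
      card_subtype_comp_eq_mul_card_ker hf fun _ => True,
      Nat.card_congr (Equiv.subtypeUnivEquiv fun _ => trivial)]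
  have hker : (Nat.card f.ker : ℚ) ≠ 0 := by exact_mod_cast Nat.card_pos.ne'
  rw [card_subtype_comp_eq_mul_card_ker hf, hA, Nat.cast_mul, Nat.cast_mul,
    mul_div_mul_right _ _ hker]

end MonoidHom

section Center

variable {G : Type*} [Group G] {a b z w : G}

theorem Commute.mul_mem_center (hab : Commute a b) (hz : z ∈ Subgroup.center G)
    (hw : w ∈ Subgroup.center G) : Commute (a * z) (b * w) :=
  (hab.mul_right (Subgroup.mem_center_iff.mp hw a)).mul_left
    (Subgroup.mem_center_iff.mp hz (b * w)).symm

theorem commute_mul_mem_center_iff (hz : z ∈ Subgroup.center G) (hw : w ∈ Subgroup.center G) :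
    Commute (a * z) (b * w) ↔ Commute a b := by
  refine ⟨fun h => ?_, fun h => h.mul_mem_center hz hw⟩
  simpa using h.mul_mem_center (inv_mem hz) (inv_mem hw)

end Center

theorem commutativity_degree_subgroup_eq_of_center_product
    {G : Type*} [Group G] [Finite G] (H : Subgroup G)
    (hHZ : ∀ g : G, ∃ h ∈ H, ∃ z ∈ Subgroup.center G, g = h * z) :
    (Nat.card {p : H × H // Commute (p.1 : G) (p.2 : G)} : ℚ) /
        (Nat.card H) ^ 2 =
      (Nat.card {p : G × G // Commute p.1 p.2} : ℚ) / (Nat.card G) ^ 2 := by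
  let mul : H × Subgroup.center G →* G :=
    MonoidHom.noncommCoprod H.subtype (Subgroup.center G).subtype fun h z =>
      Subgroup.mem_center_iff.mp z.2 h
  have mul_surjective : Function.Surjective mul := by
    intro g
    obtain ⟨h, hh, z, hz, rfl⟩ := hHZ g
    exact ⟨(⟨h, hh⟩, ⟨z, hz⟩), rfl⟩
  let fst : H × Subgroup.center G →* H := MonoidHom.fst _ _
  have via_H := (fst.prodMap fst).card_subtype_comp_div_card_eq
    (Prod.map_surjective.mpr ⟨Prod.fst_surjective, Prod.fst_surjective⟩)
    fun p => Commute (p.1 : G) p.2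
  have via_G := (mul.prodMap mul).card_subtype_comp_div_card_eq
    (Prod.map_surjective.mpr ⟨mul_surjective, mul_surjective⟩) fun p => Commute p.1 p.2
  have same_event : ∀ p : (H × Subgroup.center G) × (H × Subgroup.center G),
      Commute (mul p.1) (mul p.2) ↔ Commute (p.1.1 : G) p.2.1 := fun p =>
    commute_mul_mem_center_iff p.1.2.2 p.2.2.2
  simp only [Nat.card_prod, ← sq, Nat.cast_pow] at via_H via_G
  rw [← via_H, ← via_G]
  congr 2
  exact Nat.card_congr (Equiv.subtypeEquivRight fun p => (same_event p).symm)
end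

section
/- Let G be a finite group and H a subgroup with G = H·Z_n(G), where Z_n(G) is the n-th term of the upper central series. Then Z_n(H) = Z_n(G) ∩ H. -/
/-! Let `γ_k = (⊤ : Subgroup G).lowerCentralSeries k`, so `γ_0 = G`. Suppose `G = H Z_{r+k}(G)`;
by induction on `r`, every `c = u v ∈ γ_k` with `u ∈ Z_r(H)`, `v ∈ Z_r(G)` lies in `Z_r(G)`.
Indeed, for `g = h z` with `z ∈ Z_{r+k}(G)`, modulo `Z_{r-1}(G)` the factor `v` is central and `z`
commutes with `c`, because `⁅γ_k, Z_{r+k}(G)⁆ ≤ Z_{r-1}(G)` by the three subgroups lemma. Hence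
`⁅c, g⁆ ≡ ⁅u, h⁆ ∈ Z_{r-1}(H)`, while `⁅c, g⁆ ∈ γ_{k+1}`. For `k = 0` this gives
`Z_n(H) ≤ Z_n(G)`; the inclusion `Z_n(G) ∩ H ≤ Z_n(H)` holds for every subgroup. -/

open scoped commutatorElement

namespace Subgroup

variable {G : Type*} [Group G]

theorem commutator_commutator_le_of_rotate {N H₁ H₂ H₃ : Subgroup G} [N.Normal]
    (h1 : ⁅⁅H₂, H₃⁆, H₁⁆ ≤ N) (h2 : ⁅⁅H₃, H₁⁆, H₂⁆ ≤ N) : ⁅⁅H₁, H₂⁆, H₃⁆ ≤ N := by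
  have key : ∀ A B C : Subgroup G, ⁅⁅A, B⁆, C⁆ ≤ N ↔
      ⁅⁅A.map (QuotientGroup.mk' N), B.map (QuotientGroup.mk' N)⁆,
        C.map (QuotientGroup.mk' N)⁆ = ⊥ := by
    intro A B C
    rw [← map_commutator, ← map_commutator, map_eq_bot_iff, QuotientGroup.ker_mk']
  rw [key] at h1 h2 ⊢
  exact commutator_commutator_eq_bot_of_rotate h1 h2

theorem commutator_lowerCentralSeries_upperCentralSeries_le (m k : ℕ) :
    ⁅(⊤ : Subgroup G).lowerCentralSeries k, upperCentralSeries G (m + k + 1)⁆ ≤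
      upperCentralSeries G m := by
  induction k generalizing m with
  | zero =>
    rw [commutator_comm]
    exact commutator_upperCentralSeries_top_le G m
  | succ k ih =>
    rw [lowerCentralSeries_succ]
    apply commutator_commutator_le_of_rotate
    · calc ⁅⁅⊤, upperCentralSeries G (m + (k + 1) + 1)⁆, lowerCentralSeries ⊤ k⁆
          ≤ ⁅upperCentralSeries G (m + k + 1), lowerCentralSeries ⊤ k⁆ := by
            rw [commutator_comm ⊤]
            exact commutator_mono (commutator_upperCentralSeries_top_le G _) le_rfl
        _ ≤ upperCentralSeries G m := by
            rw [commutator_comm]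
            exact ih m
    · calc ⁅⁅upperCentralSeries G (m + (k + 1) + 1), lowerCentralSeries ⊤ k⁆, ⊤⁆
          ≤ ⁅upperCentralSeries G (m + 1), ⊤⁆ := by
            have := ih (m + 1)
            rw [add_right_comm m 1 k, commutator_comm] at this
            exact commutator_mono this le_rfl
        _ ≤ upperCentralSeries G m := commutator_upperCentralSeries_top_le G m

theorem commutatorElement_mul_mul_eq_of_mem_center {u v h z : G} (hv : v ∈ center G)
    (hz : Commute (u * v) z) : ⁅u * v, h * z⁆ = ⁅u, h⁆ := by
  have huz : Commute u z := by
    simpa using hz.mul_left (mem_center_iff.mp (inv_mem hv) z).symm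
  have hvg : ∀ g, v * g * v⁻¹ = g := fun g => by
    rw [← mem_center_iff.mp hv g, mul_inv_cancel_right]
  calc ⁅u * v, h * z⁆ = u * (v * (h * z) * v⁻¹) * u⁻¹ * z⁻¹ * h⁻¹ := by
        simp only [commutatorElement_def, mul_inv_rev, mul_assoc]
    _ = u * h * (z * u⁻¹ * z⁻¹) * h⁻¹ := by
        rw [hvg]
        simp only [mul_assoc]
    _ = ⁅u, h⁆ := by
        rw [huz.symm.inv_right.eq, mul_inv_cancel_right, commutatorElement_def]

theorem inv_commutatorElement_mul_commutatorElement_mul_mul_mem {N : Subgroup G} [N.Normal]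
    {u v h z : G} (hv : v ∈ upperCentralSeriesStep N) (hz : ⁅u * v, z⁆ ∈ N) :
    ⁅u, h⁆⁻¹ * ⁅u * v, h * z⁆ ∈ N := by
  rw [upperCentralSeriesStep_eq_comap_center] at hv
  rw [← QuotientGroup.eq_one_iff, ← QuotientGroup.mk'_apply, map_commutatorElement] at hz
  rw [← QuotientGroup.eq, ← QuotientGroup.mk'_apply, ← QuotientGroup.mk'_apply]
  simp only [map_commutatorElement, map_mul] at hz ⊢
  exact (commutatorElement_mul_mul_eq_of_mem_center hv
    (commutatorElement_eq_one_iff_commute.mp hz)).symm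

theorem comap_upperCentralSeries_le {H : Type*} [Group H] {f : H →* G}
    (hf : Function.Injective f) : ∀ n, (upperCentralSeries G n).comap f ≤ upperCentralSeries H n
  | 0 => by simpa [MonoidHom.ker_eq_bot_iff] using hf
  | n + 1 => fun _ hx y =>
    comap_upperCentralSeries_le hf n (by rw [mem_comap, map_commutatorElement]; exact hx (f y))

theorem map_upperCentralSeries_sup_inf_lowerCentralSeries_le (H : Subgroup G) (r k : ℕ)
    (hHZ : ∀ g : G, ∃ h ∈ H, ∃ z ∈ upperCentralSeries G (r + k), g = h * z) :
    ((upperCentralSeries H r).map H.subtype ⊔ upperCentralSeries G r) ⊓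
      (⊤ : Subgroup G).lowerCentralSeries k ≤ upperCentralSeries G r := by
  induction r generalizing k with
  | zero => simp
  | succ r ih =>
    rintro _ ⟨hc, hck⟩
    obtain ⟨_, ⟨u, hu, rfl⟩, v, hv, rfl⟩ := mem_sup_of_normal_right.mp hc
    intro g
    obtain ⟨h, hh, z, hz, rfl⟩ := hHZ g
    have hcz : ⁅u * v, z⁆ ∈ upperCentralSeries G r :=
      commutator_lowerCentralSeries_upperCentralSeries_le r k
        (commutator_mem_commutator hck (by rwa [add_right_comm] at hz))
    refine ih (k + 1) (by rwa [← add_assoc, add_right_comm])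
      ⟨?_, commutator_mem_commutator hck (mem_top _)⟩
    rw [← mul_inv_cancel_left ⁅(u : G), h⁆ ⁅_, h * z⁆]
    exact mul_mem_sup (mem_map_of_mem _ (hu ⟨h, hh⟩))
      (inv_commutatorElement_mul_commutatorElement_mul_mul_mem hv hcz)

end Subgroup

theorem upperCentralSeries_subgroup_eq_inf_general
    {G : Type*} [Group G] (H : Subgroup G) (n : ℕ)
    (hHZ : ∀ g : G, ∃ h ∈ H, ∃ z ∈ upperCentralSeries G n, g = h * z) :
    (upperCentralSeries H n).map H.subtype = upperCentralSeries G n ⊓ H := by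
  refine le_antisymm (le_inf (fun x hx => ?_) (Subgroup.map_subtype_le _)) ?_
  · exact Subgroup.map_upperCentralSeries_sup_inf_lowerCentralSeries_le H n 0 hHZ
      ⟨Subgroup.mem_sup_left hx, Subgroup.mem_top x⟩
  · calc upperCentralSeries G n ⊓ H
        = ((upperCentralSeries G n).comap H.subtype).map H.subtype := by
          rw [Subgroup.map_comap_eq, Subgroup.range_subtype, inf_comm]
      _ ≤ (upperCentralSeries H n).map H.subtype :=
          Subgroup.map_mono (Subgroup.comap_upperCentralSeries_le H.subtype_injective n)

theorem upperCentralSeries_subgroup_eq_inf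
    {G : Type*} [Group G] [Finite G] (H : Subgroup G) (n : ℕ)
    (hHZ : ∀ g : G, ∃ h ∈ H, ∃ z ∈ upperCentralSeries G n, g = h * z) :
    (upperCentralSeries H n).map H.subtype = upperCentralSeries G n ⊓ H :=
  upperCentralSeries_subgroup_eq_inf_general H n hHZ
end

section
/- Let G be a finite group such that G/Z(G) is a p-group of order p^k with k ≥ 2. Then the commutativity degree satisfies d(G) ≤ (p^k + p - 1)/p^{k+1}. -/
/-!
Count commuting pairs by centralizers: `|{(x, y) : xy = yx}| = ∑ₓ |C_G(x)|`. A central `x`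
contributes `|G|`. For noncentral `x`, `C_G(x)` is a proper subgroup containing `Z(G)`, so its
index is a nontrivial divisor of `|G : Z(G)| = p ^ k`, hence at least `p`, and `x` contributes at
most `|G| / p`. Summing gives `d(G) ≤ (1 + (p - 1) / p ^ k) / p`.
-/

open Subgroup

section CommutingPairs

variable {G : Type*} [Group G]

theorem card_commute_eq_sum_card_centralizer [Fintype G] :
    Nat.card {q : G × G // Commute q.1 q.2} = ∑ x : G, Nat.card (centralizer {x}) := by
  classical
  rw [Nat.card_congr (Equiv.subtypeProdEquivSigmaSubtype fun a b : G => Commute a b),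
    Nat.card_sigma]
  refine Finset.sum_congr rfl fun x _ => Nat.card_congr (Equiv.subtypeEquivRight fun y => ?_)
  rw [mem_centralizer_singleton_iff]
  exact ⟨Commute.symm, Commute.symm⟩

theorem centralizer_singleton_ne_top {x : G} (hx : x ∉ center G) : centralizer {x} ≠ ⊤ := by
  rwa [Ne, centralizer_eq_top_iff_subset, Set.singleton_subset_iff]

theorem prime_dvd_index_of_le_of_index_eq_prime_pow {p k : ℕ} (hp : p.Prime)
    {K H : Subgroup G} (hK : K.index = p ^ k) (hKH : K ≤ H) (hH : H ≠ ⊤) : p ∣ H.index := by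
  obtain ⟨j, -, hj⟩ := (Nat.dvd_prime_pow hp).mp (hK ▸ index_dvd_of_le hKH)
  cases j with
  | zero => exact absurd (index_eq_one.mp (hj.trans (pow_zero p))) hH
  | succ j => exact hj ▸ dvd_pow_self p j.succ_ne_zero

theorem commProb_le_of_le_index_centralizer [Finite G] {m : ℕ} (hm0 : 0 < m)
    (hm : ∀ x ∉ center G, m ≤ (centralizer {x}).index) :
    commProb G ≤ ((center G).index + m - 1) / (m * (center G).index) := by
  classical
  have := Fintype.ofFinite G
  set n := Nat.card G
  set z := Nat.card (center G)
  have hcentralizer (x : G) :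
      m * Nat.card (centralizer {x}) ≤ if x ∈ center G then m * n else n := by
    split_ifs with hx
    · exact Nat.mul_le_mul_left m (card_le_card_group _)
    · exact (Nat.mul_le_mul_right _ (hm x hx)).trans (index_mul_card _).le
  have hsum : (m : ℚ) * Nat.card {q : G × G // Commute q.1 q.2} ≤ z * (m * n) + (n - z) * n := by
    have := Finset.sum_le_sum fun x (_ : x ∈ Finset.univ) => hcentralizer x
    rw [← Finset.mul_sum, ← card_commute_eq_sum_card_centralizer, Finset.sum_ite,
      Finset.sum_const, Finset.sum_const, smul_eq_mul, smul_eq_mul] at this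
    have hz : (Finset.univ.filter (· ∈ center G)).card = z := by
      rw [← Fintype.card_subtype, ← Nat.card_eq_fintype_card]
    have hcompl : z + (Finset.univ.filter (· ∉ center G)).card = n := by
      rw [← hz, Finset.card_filter_add_card_filter_not, Finset.card_univ,
        ← Nat.card_eq_fintype_card]
    rw [hz, show (Finset.univ.filter (· ∉ center G)).card = n - z by omega] at this
    rw [← Nat.cast_sub (by omega)]
    exact_mod_cast this
  have hn : (n : ℚ) = (center G).index * z := by exact_mod_cast (index_mul_card _).symm
  have hn0 : (0 : ℚ) < n := by exact_mod_cast Nat.card_pos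
  have hi : (0 : ℚ) < (center G).index := by
    exact_mod_cast Nat.pos_of_ne_zero index_ne_zero_of_finite
  rw [commProb_def, div_le_div_iff₀ (by positivity) (by positivity)]
  calc _ = ((center G).index : ℚ) * (m * Nat.card {q : G × G // Commute q.1 q.2}) := by ring
    _ ≤ (center G).index * (z * (m * n) + (n - z) * n) := by gcongr
    _ = _ := by rw [hn]; ring

end CommutingPairs

theorem commutativity_degree_le_of_central_quotient_p_group_general
    {G : Type*} [Group G] [Finite G] (p k : ℕ) (hp : p.Prime)
    (hcard : Nat.card (G ⧸ Subgroup.center G) = p ^ k) :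
    (Nat.card {q : G × G // Commute q.1 q.2} : ℚ) / (Nat.card G) ^ 2 ≤
      ((p : ℚ) ^ k + p - 1) / (p : ℚ) ^ (k + 1) := by
  have hindex : ((center G).index : ℚ) = p ^ k := by exact_mod_cast hcard
  have hp_le (x : G) (hx : x ∉ center G) : p ≤ (centralizer {x}).index :=
    Nat.le_of_dvd (Nat.pos_of_ne_zero index_ne_zero_of_finite) <|
      prime_dvd_index_of_le_of_index_eq_prime_pow hp hcard (center_le_centralizer _)
        (centralizer_singleton_ne_top hx)
  calc _ = commProb G := rfl
    _ ≤ ((center G).index + p - 1) / (p * (center G).index) :=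
      commProb_le_of_le_index_centralizer hp.pos hp_le
    _ = _ := by rw [hindex, pow_succ']

theorem commutativity_degree_le_of_central_quotient_p_group
    {G : Type*} [Group G] [Finite G] (p k : ℕ) (hp : p.Prime) (hk : 2 ≤ k)
    (hcard : Nat.card (G ⧸ Subgroup.center G) = p ^ k) :
    (Nat.card {q : G × G // Commute q.1 q.2} : ℚ) / (Nat.card G) ^ 2 ≤
      ((p : ℚ) ^ k + p - 1) / (p : ℚ) ^ (k + 1) :=
  commutativity_degree_le_of_central_quotient_p_group_general p k hp hcard
end

section
/- Let G₁, G₂ be finite groups with normal subgroups N₁ ≤ Z(G₁), N₂ ≤ Z(G₂), and suppose there are isomorphisms α : G₁/N₁ → G₂/N₂ and β : G₁' → G₂' such that for all x, y ∈ G₁, β([x,y]) = [x₂,y₂] whenever x₂N₂ = α(xN₁) and y₂N₂ = α(yN₁). Then d(G₁) = d(G₂). -/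
/-!
When `N ≤ Z(G)`, whether `x` and `y` commute depends only on the cosets `xN` and `yN`, so the
commuting pairs of `G` are the full preimage of a set `S ⊆ (G/N)²` of "commuting coset pairs",
each point of which has `|N|²` preimages. Hence `commProb G = |S| / |G/N|²`. An isoclinism
`(α, β)` maps `S₁` bijectively onto `S₂`, because `⁅x, y⁆ = 1` iff `β ⁅x, y⁆ = 1` and the latter
is the commutator of representatives of `α (xN₁)` and `α (yN₁)`.
-/

open scoped commutatorElement

namespace QuotientGroup

variable {G H : Type*} [Group G] [Group H]

theorem card_preimage_prodMap_mk (A : Subgroup G) (B : Subgroup H)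
    (T : Set ((G ⧸ A) × (H ⧸ B))) :
    Nat.card (Prod.map ((↑) : G → G ⧸ A) ((↑) : H → H ⧸ B) ⁻¹' T) =
      Nat.card T * (Nat.card A * Nat.card B) := by
  let e := prodEquiv A B
  have hpre : Prod.map ((↑) : G → G ⧸ A) ((↑) : H → H ⧸ B) ⁻¹' T =
      ((↑) : G × H → (G × H) ⧸ A.prod B) ⁻¹' (e ⁻¹' T) := rfl
  rw [hpre, Nat.card_congr (preimageMkEquivSubgroupProdSet _ _), Nat.card_prod,
    Nat.card_preimage_of_injective e.injective (by simp),
    Nat.card_congr (Subgroup.prodEquiv A B).toEquiv, Nat.card_prod, mul_comm]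

end QuotientGroup

section CommutingCosetPairs

variable {G : Type*} [Group G] {N : Subgroup G}

theorem Commute.of_mk_eq_of_le_center (hN : N ≤ Subgroup.center G) {x x' y y' : G}
    (hx : (x : G ⧸ N) = x') (hy : (y : G ⧸ N) = y') (h : Commute x y) : Commute x' y' := by
  have hcx : ∀ g, Commute g (x⁻¹ * x') :=
    Subgroup.mem_center_iff.mp (hN (QuotientGroup.eq.mp hx))
  have hcy : ∀ g, Commute g (y⁻¹ * y') :=
    Subgroup.mem_center_iff.mp (hN (QuotientGroup.eq.mp hy))
  rw [← mul_inv_cancel_left x x', ← mul_inv_cancel_left y y']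
  exact (h.mul_right (hcy x)).mul_left (hcx _).symm

variable (N) in
def commutingCosetPairs : Set ((G ⧸ N) × (G ⧸ N)) :=
  {p | ∀ x y : G, (x : G ⧸ N) = p.1 → (y : G ⧸ N) = p.2 → Commute x y}

theorem mk_mem_commutingCosetPairs_iff (hN : N ≤ Subgroup.center G) (x y : G) :
    ((x : G ⧸ N), (y : G ⧸ N)) ∈ commutingCosetPairs N ↔ Commute x y :=
  ⟨fun h => h x y rfl rfl, fun h _ _ hx' hy' => h.of_mk_eq_of_le_center hN hx'.symm hy'.symm⟩

theorem commProb_eq_card_commutingCosetPairs_div [Finite G] [N.Normal]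
    (hN : N ≤ Subgroup.center G) :
    commProb G = Nat.card (commutingCosetPairs N) / (Nat.card (G ⧸ N) : ℚ) ^ 2 := by
  have hcommuting : {q : G × G | Commute q.1 q.2} =
      Prod.map ((↑) : G → G ⧸ N) ((↑) : G → G ⧸ N) ⁻¹' commutingCosetPairs N :=
    Set.ext fun q => (mk_mem_commutingCosetPairs_iff hN q.1 q.2).symm
  have hcard : Nat.card {q : G × G // Commute q.1 q.2} =
      Nat.card (commutingCosetPairs N) * Nat.card N ^ 2 := by
    rw [sq, ← QuotientGroup.card_preimage_prodMap_mk, ← hcommuting]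
    rfl
  have hN_pos : (0 : ℚ) < Nat.card N := by exact_mod_cast Nat.card_pos
  rw [commProb_def, hcard, Subgroup.card_eq_card_quotient_mul_card_subgroup N]
  push_cast
  field_simp

end CommutingCosetPairs

section Isoclinism

variable {G₁ G₂ : Type*} [Group G₁] [Group G₂] {N₁ : Subgroup G₁} {N₂ : Subgroup G₂}
  [N₁.Normal] [N₂.Normal] {α : (G₁ ⧸ N₁) ≃* (G₂ ⧸ N₂)} {β : commutator G₁ ≃* commutator G₂}

theorem map_mem_commutingCosetPairs_iff (hN₁ : N₁ ≤ Subgroup.center G₁)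
    (hN₂ : N₂ ≤ Subgroup.center G₂)
    (hβ : ∀ (x y : G₁) (x₂ y₂ : G₂),
      (x₂ : G₂ ⧸ N₂) = α (x : G₁ ⧸ N₁) → (y₂ : G₂ ⧸ N₂) = α (y : G₁ ⧸ N₁) →
      ∀ hm : ⁅x, y⁆ ∈ commutator G₁, (β ⟨⁅x, y⁆, hm⟩ : G₂) = ⁅x₂, y₂⁆)
    (p : (G₁ ⧸ N₁) × (G₁ ⧸ N₁)) :
    Prod.map α α p ∈ commutingCosetPairs N₂ ↔ p ∈ commutingCosetPairs N₁ := by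
  obtain ⟨⟨x, y⟩, rfl⟩ := Prod.map_surjective.mpr
    ⟨QuotientGroup.mk_surjective, QuotientGroup.mk_surjective⟩ p
  obtain ⟨x₂, hx₂⟩ := QuotientGroup.mk_surjective (α x)
  obtain ⟨y₂, hy₂⟩ := QuotientGroup.mk_surjective (α y)
  have hmem : ⁅x, y⁆ ∈ commutator G₁ :=
    Subgroup.commutator_mem_commutator (Subgroup.mem_top x) (Subgroup.mem_top y)
  have hcomm := hβ x y x₂ y₂ hx₂ hy₂ hmem
  simp only [Prod.map_apply, ← hx₂, ← hy₂, mk_mem_commutingCosetPairs_iff hN₁,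
    mk_mem_commutingCosetPairs_iff hN₂, ← commutatorElement_eq_one_iff_commute, ← hcomm,
    OneMemClass.coe_eq_one, MulEquiv.map_eq_one_iff, Subgroup.mk_eq_one]

theorem card_commutingCosetPairs_eq (hN₁ : N₁ ≤ Subgroup.center G₁)
    (hN₂ : N₂ ≤ Subgroup.center G₂)
    (hβ : ∀ (x y : G₁) (x₂ y₂ : G₂),
      (x₂ : G₂ ⧸ N₂) = α (x : G₁ ⧸ N₁) → (y₂ : G₂ ⧸ N₂) = α (y : G₁ ⧸ N₁) →
      ∀ hm : ⁅x, y⁆ ∈ commutator G₁, (β ⟨⁅x, y⁆, hm⟩ : G₂) = ⁅x₂, y₂⁆) :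
    Nat.card (commutingCosetPairs N₁) = Nat.card (commutingCosetPairs N₂) :=
  Nat.card_congr <| (α.toEquiv.prodCongr α.toEquiv).subtypeEquiv fun p =>
    (map_mem_commutingCosetPairs_iff hN₁ hN₂ hβ p).symm

end Isoclinism

theorem commutativity_degree_eq_of_isoclinic_central
    {G₁ G₂ : Type*} [Group G₁] [Group G₂] [Finite G₁] [Finite G₂]
    (N₁ : Subgroup G₁) (N₂ : Subgroup G₂) [N₁.Normal] [N₂.Normal]
    (hN₁ : N₁ ≤ Subgroup.center G₁) (hN₂ : N₂ ≤ Subgroup.center G₂)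
    (α : (G₁ ⧸ N₁) ≃* (G₂ ⧸ N₂))
    (β : commutator G₁ ≃* commutator G₂)
    (hβ : ∀ (x y : G₁) (x₂ y₂ : G₂),
      (x₂ : G₂ ⧸ N₂) = α (x : G₁ ⧸ N₁) → (y₂ : G₂ ⧸ N₂) = α (y : G₁ ⧸ N₁) →
      ∀ hm : ⁅x, y⁆ ∈ commutator G₁, (β ⟨⁅x, y⁆, hm⟩ : G₂) = ⁅x₂, y₂⁆) :
    (Nat.card {q : G₁ × G₁ // Commute q.1 q.2} : ℚ) / (Nat.card G₁) ^ 2 =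
      (Nat.card {q : G₂ × G₂ // Commute q.1 q.2} : ℚ) / (Nat.card G₂) ^ 2 := by
  rw [← commProb_def, ← commProb_def, commProb_eq_card_commutingCosetPairs_div hN₁,
    commProb_eq_card_commutingCosetPairs_div hN₂, card_commutingCosetPairs_eq hN₁ hN₂ hβ,
    Nat.card_congr α.toEquiv]
end

section
/- Let G₁, G₂ be finite groups that are isoclinic: there exist isomorphisms α : G₁/Z(G₁) → G₂/Z(G₂) and β : G₁' → G₂' such that β([x,y]) = [x₂,y₂] for all x,y ∈ G₁, x₂ ∈ α(xZ(G₁)), y₂ ∈ α(yZ(G₁)). Then for each x ∈ G₁ and x₂ ∈ α(xZ(G₁)), |C_{G₁}(x)|/|G₁| = |C_{G₂}(x₂)|/|G₂|. -/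
/-!
The ratio |C_G(x)| / |G| is the inverse of the size of the conjugacy class of x, and translating
that class by x⁻¹ turns it into the set {⁅g, x⁆ | g ∈ G}. Since ⁅g, x⁆ only depends on the classes
of g and x modulo the centre, isoclinism makes β map this set for x bijectively onto the
corresponding set for x₂, so the two conjugacy classes have the same size.
-/

open scoped commutatorElement

theorem Set.ncard_range_comp_of_injective {α β γ : Type*} {i : β → γ} (hi : i.Injective)
    (f : α → β) : (Set.range (i ∘ f)).ncard = (Set.range f).ncard := by
  rw [Set.range_comp, Set.ncard_image_of_injective _ hi]

theorem Subgroup.card_div_card_eq_inv_index {G : Type*} [Group G] [Finite G] (H : Subgroup G) :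
    (Nat.card H : ℚ) / Nat.card G = (H.index : ℚ)⁻¹ := by
  rw [← H.card_mul_index, Nat.cast_mul, div_mul_cancel_left₀ (by exact_mod_cast Nat.card_pos.ne')]

theorem Subgroup.index_centralizer_eq_ncard_range_commutatorElement {G : Type*} [Group G] (x : G) :
    (Subgroup.centralizer {x}).index = (Set.range fun g : G ↦ ⁅g, x⁆).ncard := by
  have hconj : (Set.range fun g : G ↦ ⁅g, x⁆) = (· * x⁻¹) '' MulAction.orbit (ConjAct G) x := by
    ext y
    simp only [Set.mem_image, Set.mem_range, ConjAct.mem_orbit_conjAct, isConj_comm (h := x),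
      isConj_iff, exists_exists_eq_and, commutatorElement_def]
  rw [hconj, Set.ncard_image_of_injective _ (mul_left_injective x⁻¹), ← MulAction.index_stabilizer,
    Subgroup.centralizer_eq_comap_stabilizer]
  exact Subgroup.index_comap_of_surjective _ ConjAct.toConjAct.surjective

theorem ncard_range_commutatorElement_eq_of_isoclinic {G₁ G₂ : Type*} [Group G₁] [Group G₂]
    (α : (G₁ ⧸ Subgroup.center G₁) ≃* (G₂ ⧸ Subgroup.center G₂))
    (β : commutator G₁ ≃* commutator G₂)
    (hβ : ∀ (x y : G₁) (x₂ y₂ : G₂),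
      (x₂ : G₂ ⧸ Subgroup.center G₂) = α (x : G₁ ⧸ Subgroup.center G₁) →
      (y₂ : G₂ ⧸ Subgroup.center G₂) = α (y : G₁ ⧸ Subgroup.center G₁) →
      ∀ hm : ⁅x, y⁆ ∈ commutator G₁, (β ⟨⁅x, y⁆, hm⟩ : G₂) = ⁅x₂, y₂⁆)
    {x : G₁} {x₂ : G₂}
    (hx : (x₂ : G₂ ⧸ Subgroup.center G₂) = α (x : G₁ ⧸ Subgroup.center G₁)) :
    (Set.range fun g : G₁ ↦ ⁅g, x⁆).ncard = (Set.range fun g₂ : G₂ ↦ ⁅g₂, x₂⁆).ncard := by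
  let c : G₁ → commutator G₁ := fun g ↦
    ⟨⁅g, x⁆, Subgroup.commutator_mem_commutator (Subgroup.mem_top g) (Subgroup.mem_top x)⟩
  have hrange : Set.range (Subtype.val ∘ β ∘ c) = Set.range fun g₂ : G₂ ↦ ⁅g₂, x₂⁆ := by
    ext y
    constructor
    · rintro ⟨g, rfl⟩
      obtain ⟨g₂, hg₂⟩ := QuotientGroup.mk_surjective (α g)
      exact ⟨g₂, (hβ g x g₂ x₂ hg₂ hx _).symm⟩
    · rintro ⟨g₂, rfl⟩
      obtain ⟨g, hg⟩ := QuotientGroup.mk_surjective (α.symm g₂)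
      exact ⟨g, hβ g x g₂ x₂ (by rw [hg, α.apply_symm_apply]) hx _⟩
  calc (Set.range fun g : G₁ ↦ ⁅g, x⁆).ncard
      = (Set.range c).ncard := Set.ncard_range_comp_of_injective Subtype.val_injective c
    _ = (Set.range (Subtype.val ∘ β ∘ c)).ncard := by
      rw [Set.ncard_range_comp_of_injective Subtype.val_injective,
        Set.ncard_range_comp_of_injective β.injective]
    _ = _ := by rw [hrange]

theorem centralizer_ratio_eq_of_isoclinic
    {G₁ G₂ : Type*} [Group G₁] [Group G₂] [Finite G₁] [Finite G₂]
    (α : (G₁ ⧸ Subgroup.center G₁) ≃* (G₂ ⧸ Subgroup.center G₂))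
    (β : commutator G₁ ≃* commutator G₂)
    (hβ : ∀ (x y : G₁) (x₂ y₂ : G₂),
      (x₂ : G₂ ⧸ Subgroup.center G₂) = α (x : G₁ ⧸ Subgroup.center G₁) →
      (y₂ : G₂ ⧸ Subgroup.center G₂) = α (y : G₁ ⧸ Subgroup.center G₁) →
      ∀ hm : ⁅x, y⁆ ∈ commutator G₁, (β ⟨⁅x, y⁆, hm⟩ : G₂) = ⁅x₂, y₂⁆)
    (x : G₁) (x₂ : G₂)
    (hx : (x₂ : G₂ ⧸ Subgroup.center G₂) = α (x : G₁ ⧸ Subgroup.center G₁)) :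
    (Nat.card (Subgroup.centralizer {x}) : ℚ) / Nat.card G₁ =
      (Nat.card (Subgroup.centralizer {x₂}) : ℚ) / Nat.card G₂ := by
  rw [Subgroup.card_div_card_eq_inv_index, Subgroup.card_div_card_eq_inv_index,
    Subgroup.index_centralizer_eq_ncard_range_commutatorElement,
    Subgroup.index_centralizer_eq_ncard_range_commutatorElement,
    ncard_range_commutatorElement_eq_of_isoclinic α β hβ hx]
end
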